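/- arXiv:math-ph/0505009 — 2 statements merged into one kernel-verified Lean document; each statement's English description precedes it below -/
import Mathlib

section
/- Conversely, if F = F₁ + F₂ (F₁ ∈ H₁, F₂ ∈ H₂) is an eigenvector of the block self-adjoint operator H_p with eigenvalue ξ < inf spec(A₂₂), then F₁ ≠ 0, F₁ is an eigenvector of the Schur-complement operator A(ξ) = A₁₁ − α²A₁₂(A₂₂ − ξ)⁻¹A₂₁ with the same eigenvalue ξ, and F₂ = −α(A₂₂ − ξ)⁻¹A₂₁F₁. -/
open ContinuousLinearMap

/-- conversely, if F = (F₁, F₂) is a (nonzero) eigenvector of the block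
operator H_p with eigenvalue ξ strictly below the spectrum of A₂₂, then F₁ ≠ 0, F₁ is an
eigenvector of the Schur complement A(ξ) = A₁₁ − α²A₁₂(A₂₂−ξ)⁻¹A₂₁ with eigenvalue ξ,
and F₂ = −α(A₂₂−ξ)⁻¹A₂₁F₁. -/
theorem schur_eigenvector_converse
    {H₁ H₂ : Type*} [NormedAddCommGroup H₁] [InnerProductSpace ℝ H₁] [CompleteSpace H₁]
    [NormedAddCommGroup H₂] [InnerProductSpace ℝ H₂] [CompleteSpace H₂]
    (α lam₂ ξ : ℝ) (hα : 0 < α) (hξ : ξ < lam₂)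
    (A₁₁ : H₁ →L[ℝ] H₁) (hA₁₁ : IsSelfAdjoint A₁₁)
    (A₂₂ : H₂ →L[ℝ] H₂) (hA₂₂ : IsSelfAdjoint A₂₂)
    (hspec : ∀ μ ∈ spectrum ℝ A₂₂, lam₂ ≤ μ)
    (A₂₁ : H₁ →L[ℝ] H₂)
    (Hp : (H₁ × H₂) →L[ℝ] (H₁ × H₂))
    (hblock : ∀ f : H₁, ∀ g : H₂,
      Hp (f, g) = (A₁₁ f + α • (ContinuousLinearMap.adjoint A₂₁) g, α • A₂₁ f + A₂₂ g))
    -- R is the resolvent (A₂₂ − ξ)⁻¹ :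
    (R : H₂ →L[ℝ] H₂)
    (hR₁ : ∀ g : H₂, A₂₂ (R g) - ξ • R g = g)
    (hR₂ : ∀ g : H₂, R (A₂₂ g - ξ • g) = g)
    (F₁ : H₁) (F₂ : H₂) (hF : (F₁, F₂) ≠ (0 : H₁ × H₂))
    (heig : Hp (F₁, F₂) = ξ • ((F₁, F₂) : H₁ × H₂)) :
    F₁ ≠ 0 ∧
    A₁₁ F₁ - α ^ 2 • (ContinuousLinearMap.adjoint A₂₁) (R (A₂₁ F₁)) = ξ • F₁ ∧
    F₂ = -α • R (A₂₁ F₁) := by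
  rw [hblock] at heig
  have h1 : A₁₁ F₁ + α • (ContinuousLinearMap.adjoint A₂₁) F₂ = ξ • F₁ :=
    congrArg Prod.fst heig
  have h2 : α • A₂₁ F₁ + A₂₂ F₂ = ξ • F₂ := congrArg Prod.snd heig
  have hF₂ : F₂ = -α • R (A₂₁ F₁) := by
    have : A₂₂ F₂ - ξ • F₂ = -α • A₂₁ F₁ := by
      rw [← h2]; module
    have := hR₂ F₂
    rw [‹A₂₂ F₂ - ξ • F₂ = -α • A₂₁ F₁›] at this
    rw [← this, map_smul]
  refine ⟨?_, ?_, hF₂⟩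
  · intro h0
    apply hF
    rw [h0] at hF₂
    simp only [map_zero, smul_zero] at hF₂
    rw [h0, hF₂]; rfl
  · rw [hF₂, map_smul] at h1
    rw [← h1]; module
end

section
/- Let h: ℝ^d → [0,∞) be bounded with ‖h‖_{L²} < ∞, and let constants b_n, d_n satisfy bounds (2.10) with constant M, i.e. the coefficient-function bounds. Then the vector F ∈ ⊕_{n≥2}(1/n!)L²(ℝ^{dn}) defined by F_n(q₁,…,qₙ) = Σᵢ bₙ(q₁,…,q̌ᵢ,…,qₙ; qᵢ) f₁(qᵢ) + ∫ dₙ(q₁,…,qₙ; q) f₁(q) dq, for f₁ ∈ L²(ℝ^d), satisfies ‖F‖ ≤ C·M·‖f₁‖ for a constant C depending only on ‖h‖_{L²}, ‖h‖_∞ and d; in particular the map f₁ ↦ F is a bounded linear operator from L²(ℝ^d) into the n≥2 sector of Fock space. -/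
/-!
Bounding `bₙ` and `dₙ` by products of `|h|` dominates every term of `Fₙ` by a product of
one-variable functions, whose `L²` norm on the product space is the product of the one-variable
norms (Fubini). The `n` terms `bₙ f₁` thus contribute `|M| ‖f₁‖ ‖h‖ⁿ⁻¹` each, and the integral
term, by Cauchy–Schwarz for `∫ |h| |f₁|`, contributes `|M| ‖f₁‖ ‖h‖ⁿ⁺¹`. Squared and weighted by
`1/n!`, these bounds are summable, with sum at most a multiple of `exp ‖h‖²`.
-/

open MeasureTheory
open scoped ENNReal

section PiProduct

variable {ι E : Type*} [Fintype ι] [MeasurableSpace E] {μ : Measure E} [SigmaFinite μ]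

theorem lintegral_pi_prod_ofReal {c : ι → E → ℝ} (hc : ∀ i, Integrable (c i) μ)
    (hc0 : ∀ i x, 0 ≤ c i x) :
    ∫⁻ x, ENNReal.ofReal (∏ i, c i (x i)) ∂Measure.pi (fun _ => μ) =
      ∏ i, ∫⁻ y, ENNReal.ofReal (c i y) ∂μ := by
  rw [← ofReal_integral_eq_lintegral_ofReal (Integrable.fintype_prod hc)
      (ae_of_all _ fun x => Finset.prod_nonneg fun i _ => hc0 i _),
    integral_fintype_prod_eq_prod,
    ENNReal.ofReal_prod_of_nonneg fun i _ => integral_nonneg (hc0 i)]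
  exact Finset.prod_congr rfl fun i _ =>
    ofReal_integral_eq_lintegral_ofReal (hc i) (ae_of_all _ (hc0 i))

theorem eLpNorm_pi_prod {p : ℝ≥0∞} (hp0 : p ≠ 0) (hp : p ≠ ∞) {c : ι → E → ℝ}
    (hc : ∀ i, MemLp (c i) p μ) :
    eLpNorm (fun x => ∏ i, c i (x i)) p (Measure.pi fun _ => μ) = ∏ i, eLpNorm (c i) p μ := by
  have hpow : ∀ t : ℝ, ‖t‖ₑ ^ p.toReal = ENNReal.ofReal (‖t‖ ^ p.toReal) := fun t => by
    rw [← ofReal_norm, ENNReal.ofReal_rpow_of_nonneg (norm_nonneg _) ENNReal.toReal_nonneg]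
  simp only [eLpNorm_eq_lintegral_rpow_enorm_toReal hp0 hp, hpow, norm_prod,
    ← Real.finsetProd_rpow _ _ fun i _ => norm_nonneg _]
  rw [lintegral_pi_prod_ofReal (fun i => (hc i).integrable_norm_rpow hp0 hp)
    (fun i x => by positivity), ENNReal.prod_rpow_of_nonneg (by positivity)]

theorem eLpNorm_pi_le_of_norm_le_mul_prod {F : Type*} [NormedAddCommGroup F] {p : ℝ≥0∞}
    (hp0 : p ≠ 0) (hp : p ≠ ∞) {G : (ι → E) → F} (C : ℝ) {c : ι → E → ℝ}
    (hc : ∀ i, MemLp (c i) p μ) (hG : ∀ x, ‖G x‖ ≤ C * ∏ i, c i (x i)) :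
    eLpNorm G p (Measure.pi fun _ => μ) ≤ ‖C‖ₑ * ∏ i, eLpNorm (c i) p μ := by
  calc eLpNorm G p (Measure.pi fun _ => μ)
      ≤ eLpNorm (C • fun x : ι → E => ∏ i, c i (x i)) p (Measure.pi fun _ => μ) :=
        eLpNorm_mono_real hG
    _ = ‖C‖ₑ * ∏ i, eLpNorm (c i) p μ := by rw [eLpNorm_const_smul, eLpNorm_pi_prod hp0 hp hc]

end PiProduct

section FockComponents

variable {E : Type*} [MeasurableSpace E] {μ : Measure E}

def creationTerm {n : ℕ} (b : (Fin n → E) → E → ℂ) (f : E → ℂ) (q : Fin (n + 1) → E) : ℂ :=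
  ∑ i, b (fun j => q (i.succAbove j)) (q i) * f (q i)

noncomputable def kernelTerm {ι : Type*} (d : (ι → E) → E → ℂ) (f : E → ℂ) (μ : Measure E)
    (q : ι → E) : ℂ :=
  ∫ q', d q q' * f q' ∂μ

theorem enorm_integral_norm_mul_norm_le {F G : Type*} [NormedAddCommGroup F]
    [NormedAddCommGroup G] {f : E → F} {g : E → G} (hf : AEStronglyMeasurable f μ)
    (hg : AEStronglyMeasurable g μ) :
    ‖∫ x, ‖f x‖ * ‖g x‖ ∂μ‖ₑ ≤ eLpNorm f 2 μ * eLpNorm g 2 μ := by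
  calc ‖∫ x, ‖f x‖ * ‖g x‖ ∂μ‖ₑ ≤ eLpNorm (fun x => ‖f x‖ * ‖g x‖) 1 μ := by
        rw [eLpNorm_one_eq_lintegral_enorm]; exact enorm_integral_le_lintegral_enorm _
    _ ≤ 1 * eLpNorm f 2 μ * eLpNorm g 2 μ :=
        eLpNorm_le_eLpNorm_mul_eLpNorm_of_nnnorm hf hg (fun x y => ‖x‖ * ‖y‖) 1
          (ae_of_all _ fun x => by simp)
    _ = eLpNorm f 2 μ * eLpNorm g 2 μ := by rw [one_mul]

variable {h : E → ℝ} {M : ℝ}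

theorem norm_kernelTerm_le {ι : Type*} [Fintype ι] {d : (ι → E) → E → ℂ} (f : Lp ℂ 2 μ)
    (hh : MemLp h 2 μ) (hd : ∀ q q', ‖d q q'‖ ≤ M * ‖h q'‖ * ∏ i, ‖h (q i)‖) (q : ι → E) :
    ‖kernelTerm d f μ q‖ ≤ (M * ∫ x, ‖h x‖ * ‖f x‖ ∂μ) * ∏ i, ‖h (q i)‖ := by
  have hint : Integrable (fun x => ‖h x‖ * ‖f x‖) μ := hh.norm.integrable_mul (Lp.memLp f).norm
  calc ‖kernelTerm d f μ q‖
      ≤ ∫ x, (M * ∏ i, ‖h (q i)‖) * (‖h x‖ * ‖f x‖) ∂μ :=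
        norm_integral_le_of_norm_le (hint.const_mul _) <| ae_of_all _ fun x => by
          rw [norm_mul]
          nlinarith [hd q x, norm_nonneg (f x)]
    _ = (M * ∫ x, ‖h x‖ * ‖f x‖ ∂μ) * ∏ i, ‖h (q i)‖ := by rw [integral_const_mul]; ring

variable [SigmaFinite μ]

theorem eLpNorm_creationSummand_le {n : ℕ} {b : (Fin n → E) → E → ℂ} (f : Lp ℂ 2 μ)
    (hh : MemLp h 2 μ) (hb : ∀ q q', ‖b q q'‖ ≤ M * ∏ i, ‖h (q i)‖) (i : Fin (n + 1)) :
    eLpNorm (fun q : Fin (n + 1) → E => b (fun j => q (i.succAbove j)) (q i) * f (q i)) 2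
        (Measure.pi fun _ => μ) ≤ ‖M‖ₑ * (‖f‖ₑ * eLpNorm h 2 μ ^ n) := by
  set c : Fin (n + 1) → E → ℝ := Function.update (fun _ x => ‖h x‖) i (fun x => ‖f x‖)
  have hc : ∀ j, MemLp (c j) 2 μ := fun j => by
    rcases eq_or_ne j i with rfl | hj
    · simpa [c] using (Lp.memLp f).norm
    · simpa [c, hj] using hh.norm
  refine (eLpNorm_pi_le_of_norm_le_mul_prod two_ne_zero ENNReal.ofNat_ne_top M hc
    fun q => ?_).trans_eq ?_
  · rw [norm_mul, Fin.prod_univ_succAbove _ i]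
    simp only [c, Function.update_self, ne_eq, Fin.succAbove_ne, not_false_eq_true,
      Function.update_of_ne]
    nlinarith [hb (fun j => q (i.succAbove j)) (q i), norm_nonneg (f (q i))]
  · rw [Fin.prod_univ_succAbove _ i]
    simp [c, Fin.succAbove_ne, eLpNorm_norm, Lp.enorm_def, -Real.norm_eq_abs]

theorem memLp_creationSummand {n : ℕ} {b : (Fin n → E) → E → ℂ}
    (hbm : Measurable (Function.uncurry b)) (f : Lp ℂ 2 μ) (hh : MemLp h 2 μ)
    (hb : ∀ q q', ‖b q q'‖ ≤ M * ∏ i, ‖h (q i)‖) (i : Fin (n + 1)) :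
    MemLp (fun q : Fin (n + 1) → E => b (fun j => q (i.succAbove j)) (q i) * f (q i)) 2
      (Measure.pi fun _ => μ) := by
  refine ⟨?_, (eLpNorm_creationSummand_le f hh hb i).trans_lt ?_⟩
  · have hbq : Measurable fun q : Fin (n + 1) → E => b (fun j => q (i.succAbove j)) (q i) :=
      hbm.comp (f := fun q : Fin (n + 1) → E => (fun j => q (i.succAbove j), q i))
        ((measurable_pi_lambda _ fun j => measurable_pi_apply _).prodMk (measurable_pi_apply i))
    exact (hbq.stronglyMeasurable.mul
      ((Lp.stronglyMeasurable f).comp_measurable (measurable_pi_apply i))).aestronglyMeasurable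
  · have := hh.eLpNorm_lt_top
    finiteness

theorem memLp_creationTerm {n : ℕ} {b : (Fin n → E) → E → ℂ}
    (hbm : Measurable (Function.uncurry b)) (f : Lp ℂ 2 μ) (hh : MemLp h 2 μ)
    (hb : ∀ q q', ‖b q q'‖ ≤ M * ∏ i, ‖h (q i)‖) :
    MemLp (creationTerm b f) 2 (Measure.pi fun _ => μ) :=
  memLp_finsetSum Finset.univ fun i _ => memLp_creationSummand hbm f hh hb i

theorem eLpNorm_creationTerm_le {n : ℕ} {b : (Fin n → E) → E → ℂ}
    (hbm : Measurable (Function.uncurry b)) (f : Lp ℂ 2 μ) (hh : MemLp h 2 μ)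
    (hb : ∀ q q', ‖b q q'‖ ≤ M * ∏ i, ‖h (q i)‖) :
    eLpNorm (creationTerm b f) 2 (Measure.pi fun _ => μ) ≤
      (n + 1) * (‖M‖ₑ * (‖f‖ₑ * eLpNorm h 2 μ ^ n)) := by
  have hsum := eLpNorm_sum_le (s := Finset.univ)
    (fun i _ => (memLp_creationSummand hbm f hh hb i).1) one_le_two
  calc eLpNorm (creationTerm b f) 2 (Measure.pi fun _ => μ)
      ≤ ∑ i : Fin (n + 1), eLpNorm (fun q : Fin (n + 1) → E =>
          b (fun j => q (i.succAbove j)) (q i) * f (q i)) 2 (Measure.pi fun _ => μ) := by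
        convert hsum using 2
        ext q
        simp [creationTerm, Finset.sum_apply]
    _ ≤ ∑ _i : Fin (n + 1), ‖M‖ₑ * (‖f‖ₑ * eLpNorm h 2 μ ^ n) :=
        Finset.sum_le_sum fun i _ => eLpNorm_creationSummand_le f hh hb i
    _ = (n + 1) * (‖M‖ₑ * (‖f‖ₑ * eLpNorm h 2 μ ^ n)) := by simp

theorem eLpNorm_kernelTerm_le {ι : Type*} [Fintype ι] {d : (ι → E) → E → ℂ} (f : Lp ℂ 2 μ)
    (hh : MemLp h 2 μ) (hd : ∀ q q', ‖d q q'‖ ≤ M * ‖h q'‖ * ∏ i, ‖h (q i)‖) :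
    eLpNorm (kernelTerm d f μ) 2 (Measure.pi fun _ => μ) ≤
      ‖M‖ₑ * (eLpNorm h 2 μ * ‖f‖ₑ) * eLpNorm h 2 μ ^ Fintype.card ι := by
  refine (eLpNorm_pi_le_of_norm_le_mul_prod two_ne_zero ENNReal.ofNat_ne_top _
    (fun _ => hh.norm) (norm_kernelTerm_le f hh hd)).trans ?_
  rw [enorm_mul, Finset.prod_const, Finset.card_univ, eLpNorm_norm, Lp.enorm_def]
  gcongr
  exact enorm_integral_norm_mul_norm_le hh.1 (Lp.aestronglyMeasurable f)

theorem memLp_kernelTerm {ι : Type*} [Fintype ι] {d : (ι → E) → E → ℂ}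
    (hdm : Measurable (Function.uncurry d)) (f : Lp ℂ 2 μ) (hh : MemLp h 2 μ)
    (hd : ∀ q q', ‖d q q'‖ ≤ M * ‖h q'‖ * ∏ i, ‖h (q i)‖) :
    MemLp (kernelTerm d f μ) 2 (Measure.pi fun _ => μ) := by
  refine ⟨?_, ?_⟩
  · exact (hdm.stronglyMeasurable.mul ((Lp.stronglyMeasurable f).comp_measurable
      measurable_snd)).integral_prod_right'.aestronglyMeasurable
  · have := hh.eLpNorm_lt_top
    exact (eLpNorm_kernelTerm_le f hh hd).trans_lt (by finiteness)

theorem fockComponent_memLp_and_eLpNorm_le {n : ℕ} {b : (Fin (n + 1) → E) → E → ℂ}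
    {d : (Fin (n + 2) → E) → E → ℂ} (hbm : Measurable (Function.uncurry b))
    (hdm : Measurable (Function.uncurry d)) (f : Lp ℂ 2 μ) (hh : MemLp h 2 μ)
    (hb : ∀ q q', ‖b q q'‖ ≤ M * ∏ i, ‖h (q i)‖)
    (hd : ∀ q q', ‖d q q'‖ ≤ M * ‖h q'‖ * ∏ i, ‖h (q i)‖) :
    MemLp (creationTerm b f + kernelTerm d f μ) 2 (Measure.pi fun _ => μ) ∧
      eLpNorm (creationTerm b f + kernelTerm d f μ) 2 (Measure.pi fun _ => μ) ≤
        ‖M‖ₑ * ‖f‖ₑ * (eLpNorm h 2 μ ^ (n + 1) * ((n + 2) + eLpNorm h 2 μ ^ 2)) := by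
  have hc := memLp_creationTerm hbm f hh hb
  have hk := memLp_kernelTerm hdm f hh hd
  refine ⟨hc.add hk, (eLpNorm_add_le hc.1 hk.1 one_le_two).trans ?_⟩
  refine (add_le_add (eLpNorm_creationTerm_le hbm f hh hb) (eLpNorm_kernelTerm_le f hh hd)).trans
    (le_of_eq ?_)
  rw [Fintype.card_fin]
  push_cast
  ring

end FockComponents

section ExponentialSeries

open Nat

theorem sq_pow_mul_add_div_factorial_le {a : ℝ} (n : ℕ) :
    (a ^ (n + 1) * (n + 2 + a ^ 2)) ^ 2 / (n + 2)! ≤ 2 * (1 + a ^ 2) ^ 3 * ((a ^ 2) ^ n / n !) := by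
  have hfac : ((n + 2)! : ℝ) = (n + 2) * (n + 1) * n ! := by
    push_cast [Nat.factorial_succ]; ring
  have key : a ^ 2 * (n + 2 + a ^ 2) ^ 2 ≤ 2 * (1 + a ^ 2) ^ 3 * ((n + 2) * (n + 1)) := by
    have h1 : (n + 2 + a ^ 2 : ℝ) ≤ (n + 2) * (1 + a ^ 2) := by nlinarith [sq_nonneg a]
    have h2 : ((n : ℝ) + 2) ^ 2 ≤ 2 * ((n + 2) * (n + 1)) := by nlinarith
    calc a ^ 2 * (n + 2 + a ^ 2) ^ 2 ≤ (1 + a ^ 2) * ((n + 2) * (1 + a ^ 2)) ^ 2 := by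
          gcongr; linarith
      _ = (1 + a ^ 2) ^ 3 * (n + 2) ^ 2 := by ring
      _ ≤ (1 + a ^ 2) ^ 3 * (2 * ((n + 2) * (n + 1))) := by gcongr
      _ = 2 * (1 + a ^ 2) ^ 3 * ((n + 2) * (n + 1)) := by ring
  rw [div_le_iff₀ (by positivity), hfac]
  calc (a ^ (n + 1) * (n + 2 + a ^ 2)) ^ 2 = (a ^ 2) ^ n * (a ^ 2 * (n + 2 + a ^ 2) ^ 2) := by
        ring
    _ ≤ (a ^ 2) ^ n * (2 * (1 + a ^ 2) ^ 3 * ((n + 2) * (n + 1))) := by gcongr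
    _ = 2 * (1 + a ^ 2) ^ 3 * ((a ^ 2) ^ n / n !) * ((n + 2) * (n + 1) * n !) := by
        field_simp

theorem tsum_div_factorial_mul_sq_le {a K : ℝ} (ha : 0 ≤ a) (hK : 0 ≤ K) {e : ℕ → ℝ≥0∞}
    (he : ∀ n, e n ≤ ENNReal.ofReal (K * (a ^ (n + 1) * (n + 2 + a ^ 2)))) :
    ∑' n, 1 / ((n + 2)! : ℝ≥0∞) * e n ^ 2 ≤
      ENNReal.ofReal (K ^ 2 * (2 * (1 + a ^ 2) ^ 3 * Real.exp (a ^ 2))) := by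
  have hexp : HasSum (fun n => K ^ 2 * (2 * (1 + a ^ 2) ^ 3 * ((a ^ 2) ^ n / n !)))
      (K ^ 2 * (2 * (1 + a ^ 2) ^ 3 * Real.exp (a ^ 2))) := by
    rw [Real.exp_eq_exp_ℝ]
    exact ((NormedSpace.expSeries_div_hasSum_exp (a ^ 2)).mul_left _).mul_left _
  rw [← hexp.tsum_eq, ENNReal.ofReal_tsum_of_nonneg (fun n => by positivity) hexp.summable]
  refine ENNReal.tsum_le_tsum fun n => ?_
  calc 1 / ((n + 2)! : ℝ≥0∞) * e n ^ 2
      ≤ 1 / ((n + 2)! : ℝ≥0∞) * ENNReal.ofReal (K * (a ^ (n + 1) * (n + 2 + a ^ 2))) ^ 2 := by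
        gcongr; exact he n
    _ = ENNReal.ofReal (K ^ 2 * ((a ^ (n + 1) * (n + 2 + a ^ 2)) ^ 2 / (n + 2)!)) := by
        rw [← ENNReal.ofReal_pow (by positivity), ← mul_div_assoc, ← mul_pow,
          ENNReal.ofReal_div_of_pos (by positivity), ENNReal.ofReal_natCast, one_div,
          ENNReal.div_eq_inv_mul]
    _ ≤ ENNReal.ofReal (K ^ 2 * (2 * (1 + a ^ 2) ^ 3 * ((a ^ 2) ^ n / n !))) := by
        gcongr
        exact sq_pow_mul_add_div_factorial_le n

end ExponentialSeries

theorem coefficient_bounds_give_bounded_fock_map_general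
    {d : ℕ}
    (h : (Fin d → ℝ) → ℝ)
    (hL2 : MemLp h 2 (volume : Measure (Fin d → ℝ)))
    (M : ℝ)
    (b : (n : ℕ) → (Fin (n + 1) → (Fin d → ℝ)) → (Fin d → ℝ) → ℂ)
    (dd : (n : ℕ) → (Fin (n + 2) → (Fin d → ℝ)) → (Fin d → ℝ) → ℂ)
    (hbmeas : ∀ n, Measurable (Function.uncurry (b n)))
    (hdmeas : ∀ n, Measurable (Function.uncurry (dd n)))
    (hb : ∀ n, ∀ q : Fin (n + 1) → (Fin d → ℝ), ∀ q',
      ‖b n q q'‖ ≤ M * ∏ i, h (q i))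
    (hd : ∀ n, ∀ q : Fin (n + 2) → (Fin d → ℝ), ∀ q',
      ‖dd n q q'‖ ≤ M * h q' * ∏ i, h (q i)) :
    ∃ C : ℝ, 0 < C ∧
      ∀ f₁ : Lp ℂ 2 (volume : Measure (Fin d → ℝ)),
        (∀ n : ℕ,
          MemLp
            (fun q : Fin (n + 2) → (Fin d → ℝ) =>
              (∑ i, b n (fun j => q (Fin.succAbove i j)) (q i) * f₁ (q i)) +
                ∫ q' : Fin d → ℝ, dd n q q' * f₁ q')
            2 (volume : Measure (Fin (n + 2) → (Fin d → ℝ)))) ∧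
        ∑' n : ℕ,
            ((1 : ℝ≥0∞) / (Nat.factorial (n + 2) : ℝ≥0∞)) *
              (eLpNorm
                (fun q : Fin (n + 2) → (Fin d → ℝ) =>
                  (∑ i, b n (fun j => q (Fin.succAbove i j)) (q i) * f₁ (q i)) +
                    ∫ q' : Fin d → ℝ, dd n q q' * f₁ q')
                2 (volume : Measure (Fin (n + 2) → (Fin d → ℝ)))) ^ 2 ≤
          ENNReal.ofReal ((C * M * ‖f₁‖) ^ 2) := by
  set a := (eLpNorm h 2 volume).toReal
  have ha0 : 0 ≤ a := ENNReal.toReal_nonneg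
  have ha : eLpNorm h 2 volume = ENNReal.ofReal a :=
    (ENNReal.ofReal_toReal hL2.eLpNorm_ne_top).symm
  have hb' : ∀ n q q', ‖b n q q'‖ ≤ |M| * ∏ i, ‖h (q i)‖ := fun n q q' =>
    (hb n q q').trans <| by simpa [abs_mul, Finset.abs_prod] using le_abs_self (M * ∏ i, h (q i))
  have hd' : ∀ n q q', ‖dd n q q'‖ ≤ |M| * ‖h q'‖ * ∏ i, ‖h (q i)‖ := fun n q q' =>
    (hd n q q').trans <| by
      simpa [abs_mul, Finset.abs_prod] using le_abs_self (M * h q' * ∏ i, h (q i))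
  refine ⟨√(2 * (1 + a ^ 2) ^ 3 * Real.exp (a ^ 2)), by positivity, fun f₁ => ?_⟩
  have level n := fockComponent_memLp_and_eLpNorm_le (hbmeas n) (hdmeas n) f₁ hL2 (hb' n) (hd' n)
  refine ⟨fun n => (level n).1, ?_⟩
  refine (tsum_div_factorial_mul_sq_le (K := |M| * ‖f₁‖) ha0 (by positivity)
    fun n => (level n).2.trans_eq ?_).trans_eq ?_
  · rw [ha, Real.enorm_of_nonneg (abs_nonneg M), ← ofReal_norm, ENNReal.ofReal_mul (by positivity),
      ENNReal.ofReal_mul (by positivity), ENNReal.ofReal_mul (by positivity),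
      ENNReal.ofReal_pow ha0, ENNReal.ofReal_add (by positivity) (by positivity),
      ENNReal.ofReal_add (by positivity) (by positivity), ENNReal.ofReal_pow ha0,
      ENNReal.ofReal_natCast, ENNReal.ofReal_ofNat]
  · congr 1
    rw [mul_pow, mul_pow, mul_pow, Real.sq_sqrt (by positivity), sq_abs]
    ring

/-- coefficient-function bounds (2.10) imply that
f₁ ↦ F = (Fₙ)_{n≥2}, with
Fₙ(q₁,…,qₙ) = Σᵢ bₙ(q₁,…,q̌ᵢ,…,qₙ;qᵢ)f₁(qᵢ) + ∫ dₙ(q₁,…,qₙ;q)f₁(q)dq,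
is a bounded linear operator from L²(ℝ^d) into the n ≥ 2 sector of Fock space:
each Fₙ is in L²(ℝ^{dn}) and Σₙ (1/n!)‖Fₙ‖² ≤ (C·M·‖f₁‖)² for a constant C depending
only on ‖h‖_{L²}, ‖h‖_∞ and d.  (Level n+2 plays the role of n ≥ 2.) -/
theorem coefficient_bounds_give_bounded_fock_map
    {d : ℕ}
    (h : (Fin d → ℝ) → ℝ) (hmeas : Measurable h) (hnn : ∀ x, 0 ≤ h x)
    (hL2 : MemLp h 2 (volume : Measure (Fin d → ℝ)))
    (hbdd : ∃ Hb : ℝ, ∀ x, h x ≤ Hb)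
    (M : ℝ) (hM : 0 ≤ M)
    (b : (n : ℕ) → (Fin (n + 1) → (Fin d → ℝ)) → (Fin d → ℝ) → ℂ)
    (dd : (n : ℕ) → (Fin (n + 2) → (Fin d → ℝ)) → (Fin d → ℝ) → ℂ)
    (hbmeas : ∀ n, Measurable (Function.uncurry (b n)))
    (hdmeas : ∀ n, Measurable (Function.uncurry (dd n)))
    (hbsym : ∀ n, ∀ σ : Equiv.Perm (Fin (n + 1)), ∀ q q', b n (q ∘ σ) q' = b n q q')
    (hdsym : ∀ n, ∀ σ : Equiv.Perm (Fin (n + 2)), ∀ q q', dd n (q ∘ σ) q' = dd n q q')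
    (hb : ∀ n, ∀ q : Fin (n + 1) → (Fin d → ℝ), ∀ q',
      ‖b n q q'‖ ≤ M * ∏ i, h (q i))
    (hd : ∀ n, ∀ q : Fin (n + 2) → (Fin d → ℝ), ∀ q',
      ‖dd n q q'‖ ≤ M * h q' * ∏ i, h (q i)) :
    ∃ C : ℝ, 0 < C ∧
      ∀ f₁ : Lp ℂ 2 (volume : Measure (Fin d → ℝ)),
        (∀ n : ℕ,
          MemLp
            (fun q : Fin (n + 2) → (Fin d → ℝ) =>
              (∑ i, b n (fun j => q (Fin.succAbove i j)) (q i) * f₁ (q i)) +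
                ∫ q' : Fin d → ℝ, dd n q q' * f₁ q')
            2 (volume : Measure (Fin (n + 2) → (Fin d → ℝ)))) ∧
        ∑' n : ℕ,
            ((1 : ℝ≥0∞) / (Nat.factorial (n + 2) : ℝ≥0∞)) *
              (eLpNorm
                (fun q : Fin (n + 2) → (Fin d → ℝ) =>
                  (∑ i, b n (fun j => q (Fin.succAbove i j)) (q i) * f₁ (q i)) +
                    ∫ q' : Fin d → ℝ, dd n q q' * f₁ q')
                2 (volume : Measure (Fin (n + 2) → (Fin d → ℝ)))) ^ 2 ≤
          ENNReal.ofReal ((C * M * ‖f₁‖) ^ 2) :=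
  coefficient_bounds_give_bounded_fock_map_general h hL2 M b dd hbmeas hdmeas hb hd
end
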